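/- Let δ > 0 and Q = [0,1]×[0,δ]. Let C¹ᵐ, C²ᵐ : ℝ² → ℝ^{2×2×2×2} be measurable, bounded, Q-periodic tensor fields, each pointwise symmetric and positive semidefinite, and ordered as quadratic forms: C¹ᵐ_{ijkl}(ξ) E_{ij} E_{kl} ≤ C²ᵐ_{ijkl}(ξ) E_{ij} E_{kl} for every 2×2 matrix E and every ξ. Fix a constant 2×2 matrix H, and let w¹, w² : ℝ² → ℝ² be continuously differentiable Q-periodic solutions of the respective weak corrector cell problems: ∫_Q Cᵃᵐ_{ijkl} (H_{kl} + ∂wᵃ_k/∂ξ_l)(∂φ_i/∂ξ_j) dξ = 0 for all continuously differentiable Q-periodic φ, a = 1, 2. Then the homogenized quadratic forms are ordered the same way: ∫_Q C¹ᵐ_{ijkl} (H_{ij} + ∂w¹_i/∂ξ_j)(H_{kl} + ∂w¹_k/∂ξ_l) dξ ≤ ∫_Q C²ᵐ_{ijkl} (H_{ij} + ∂w²_i/∂ξ_j)(H_{kl} + ∂w²_k/∂ξ_l) dξ. -/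

import Mathlib

open MeasureTheory

noncomputable section

/-- `g` is periodic with respect to the cell `Q = [0,1] × [0,δ]`. -/
def QPer {α : Type*} (δ : ℝ) (g : (Fin 2 → ℝ) → α) : Prop :=
  (∀ ξ, g (ξ + Pi.single 0 1) = g ξ) ∧ (∀ ξ, g (ξ + Pi.single 1 δ) = g ξ)

/-- The periodicity cell `Q = [0,1] × [0,δ] ⊂ ℝ²`. -/
def cell (δ : ℝ) : Set (Fin 2 → ℝ) := Set.Icc 0 ![1, δ]

/-- Double contraction `C_{ijkl} A_{ij} B_{kl}`. -/
def contr (C : Fin 2 → Fin 2 → Fin 2 → Fin 2 → ℝ) (A B : Fin 2 → Fin 2 → ℝ) : ℝ :=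
  ∑ i, ∑ j, ∑ k, ∑ l, C i j k l * A i j * B k l

/-- Displacement gradient `(∇v)_{kl}(ξ) = ∂v_k/∂ξ_l (ξ)`. -/
def sgrad (v : (Fin 2 → ℝ) → (Fin 2 → ℝ)) (ξ : Fin 2 → ℝ) : Fin 2 → Fin 2 → ℝ :=
  fun k l => fderiv ℝ (fun ζ => v ζ k) ξ (Pi.single l 1)

/-!
The corrector `w¹` minimises the `C¹ᵐ`-energy `v ↦ ∫_Q C¹ᵐ (H + ∇v) : (H + ∇v)` among periodic
fields: writing `w² = w¹ + φ` with `φ` periodic, the symmetry of `C¹ᵐ` turns the energy of `w²`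
into that of `w¹` plus twice the cross term, which vanishes by the weak cell problem, plus the
nonnegative energy of `∇φ`. Hence the `C¹ᵐ`-energy of `w¹` is at most the `C¹ᵐ`-energy of `w²`,
which is at most its `C²ᵐ`-energy since `C¹ᵐ ≤ C²ᵐ` pointwise.
-/

lemma contr_eq_sum_prod (C : Fin 2 → Fin 2 → Fin 2 → Fin 2 → ℝ) (A B : Fin 2 → Fin 2 → ℝ) :
    contr C A B =
      ∑ p : Fin 2 × Fin 2, ∑ q : Fin 2 × Fin 2, C p.1 p.2 q.1 q.2 * A p.1 p.2 * B q.1 q.2 := by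
  simp only [contr, Fintype.sum_prod_type]

section SymmetricTensor

variable {C : Fin 2 → Fin 2 → Fin 2 → Fin 2 → ℝ}

lemma contr_comm (hC : ∀ i j k l, C i j k l = C k l i j) (A B : Fin 2 → Fin 2 → ℝ) :
    contr C A B = contr C B A := by
  rw [contr_eq_sum_prod, contr_eq_sum_prod, Finset.sum_comm]
  refine Finset.sum_congr rfl fun p _ => Finset.sum_congr rfl fun q _ => ?_
  rw [hC]; ring

lemma contr_add_add (hC : ∀ i j k l, C i j k l = C k l i j) (A P : Fin 2 → Fin 2 → ℝ) :
    contr C (A + P) (A + P) = contr C A A + 2 * contr C P A + contr C P P := by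
  have hAP := contr_comm hC A P
  simp only [contr, Fin.sum_univ_two, Pi.add_apply] at hAP ⊢
  linear_combination hAP

end SymmetricTensor

theorem IsCompact.integrableOn_contr {X : Type*} [TopologicalSpace X] [T2Space X]
    [MeasurableSpace X] [OpensMeasurableSpace X] {μ : Measure X} [IsFiniteMeasureOnCompacts μ]
    {K : Set X} (hK : IsCompact K) {C : X → Fin 2 → Fin 2 → Fin 2 → Fin 2 → ℝ}
    (hCmeas : ∀ i j k l, Measurable fun x => C x i j k l)
    (hCbdd : ∃ M, ∀ x i j k l, |C x i j k l| ≤ M) {A B : X → Fin 2 → Fin 2 → ℝ}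
    (hA : ∀ i j, Continuous fun x => A x i j) (hB : ∀ i j, Continuous fun x => B x i j) :
    IntegrableOn (fun x => contr (C x) (A x) (B x)) K μ := by
  obtain ⟨M, hM⟩ := hCbdd
  refine integrable_finsetSum _ fun i _ => integrable_finsetSum _ fun j _ =>
    integrable_finsetSum _ fun k _ => integrable_finsetSum _ fun l _ => ?_
  simp_rw [mul_assoc]
  exact (((hA i j).mul (hB k l)).continuousOn.integrableOn_compact hK).bdd_mul
    (hCmeas i j k l).aestronglyMeasurable (ae_of_all _ fun x => hM x i j k l)

lemma QPer.sub {α : Type*} [Sub α] {δ : ℝ} {f g : (Fin 2 → ℝ) → α} (hf : QPer δ f)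
    (hg : QPer δ g) : QPer δ (f - g) :=
  ⟨fun ξ => by simp only [Pi.sub_apply, hf.1, hg.1],
    fun ξ => by simp only [Pi.sub_apply, hf.2, hg.2]⟩

lemma continuous_sgrad {v : (Fin 2 → ℝ) → (Fin 2 → ℝ)} (hv : ContDiff ℝ 1 v) (k l : Fin 2) :
    Continuous fun ξ => sgrad v ξ k l :=
  ((contDiff_pi.1 hv k).continuous_fderiv one_ne_zero).clm_apply continuous_const

lemma sgrad_sub {u v : (Fin 2 → ℝ) → (Fin 2 → ℝ)} (hv : Differentiable ℝ v)
    (hu : Differentiable ℝ u) (ξ : Fin 2 → ℝ) : sgrad (v - u) ξ = sgrad v ξ - sgrad u ξ := by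
  ext k l
  simp only [sgrad, Pi.sub_apply]
  rw [fderiv_fun_sub (differentiable_pi.1 hv k ξ) (differentiable_pi.1 hu k ξ)]
  rfl

def cellEnergy (δ : ℝ) (C : (Fin 2 → ℝ) → Fin 2 → Fin 2 → Fin 2 → Fin 2 → ℝ)
    (H : Fin 2 → Fin 2 → ℝ) (w : (Fin 2 → ℝ) → (Fin 2 → ℝ)) : ℝ :=
  ∫ ξ in cell δ, contr (C ξ) (H + sgrad w ξ) (H + sgrad w ξ)

def IsWeakCorrector (δ : ℝ) (C : (Fin 2 → ℝ) → Fin 2 → Fin 2 → Fin 2 → Fin 2 → ℝ)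
    (H : Fin 2 → Fin 2 → ℝ) (w : (Fin 2 → ℝ) → (Fin 2 → ℝ)) : Prop :=
  ∀ φ : (Fin 2 → ℝ) → (Fin 2 → ℝ), ContDiff ℝ 1 φ → QPer δ φ →
    ∫ ξ in cell δ, contr (C ξ) (sgrad φ ξ) (H + sgrad w ξ) = 0

section CellEnergy

variable {δ : ℝ} {C C' : (Fin 2 → ℝ) → Fin 2 → Fin 2 → Fin 2 → Fin 2 → ℝ}
  {H : Fin 2 → Fin 2 → ℝ} {u v w : (Fin 2 → ℝ) → (Fin 2 → ℝ)}

lemma integrableOn_cell_contr_sgrad (hCmeas : ∀ i j k l, Measurable fun ξ => C ξ i j k l)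
    (hCbdd : ∃ M, ∀ ξ i j k l, |C ξ i j k l| ≤ M) (A B : Fin 2 → Fin 2 → ℝ)
    (hu : ContDiff ℝ 1 u) (hv : ContDiff ℝ 1 v) :
    IntegrableOn (fun ξ => contr (C ξ) (A + sgrad u ξ) (B + sgrad v ξ)) (cell δ) :=
  isCompact_Icc.integrableOn_contr hCmeas hCbdd
    (fun i j => continuous_const.add (continuous_sgrad hu i j))
    (fun i j => continuous_const.add (continuous_sgrad hv i j))

theorem IsWeakCorrector.cellEnergy_le (hw : IsWeakCorrector δ C H w)
    (hCmeas : ∀ i j k l, Measurable fun ξ => C ξ i j k l)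
    (hCbdd : ∃ M, ∀ ξ i j k l, |C ξ i j k l| ≤ M)
    (hCsym : ∀ ξ i j k l, C ξ i j k l = C ξ k l i j)
    (hCpsd : ∀ ξ E, 0 ≤ contr (C ξ) E E)
    (hwC1 : ContDiff ℝ 1 w) (hwper : QPer δ w) (hvC1 : ContDiff ℝ 1 v) (hvper : QPer δ v) :
    cellEnergy δ C H w ≤ cellEnergy δ C H v := by
  set φ := v - w
  have hφC1 : ContDiff ℝ 1 φ := hvC1.sub hwC1
  have hexpand (ξ : Fin 2 → ℝ) : contr (C ξ) (H + sgrad v ξ) (H + sgrad v ξ) =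
      contr (C ξ) (H + sgrad w ξ) (H + sgrad w ξ)
        + 2 * contr (C ξ) (sgrad φ ξ) (H + sgrad w ξ) + contr (C ξ) (sgrad φ ξ) (sgrad φ ξ) := by
    have hgrad : H + sgrad v ξ = (H + sgrad w ξ) + sgrad φ ξ := by
      rw [sgrad_sub (hvC1.differentiable one_ne_zero) (hwC1.differentiable one_ne_zero)]
      abel
    rw [hgrad, contr_add_add (hCsym ξ)]
  have hww := integrableOn_cell_contr_sgrad (δ := δ) hCmeas hCbdd H H hwC1 hwC1
  have hφw := integrableOn_cell_contr_sgrad (δ := δ) hCmeas hCbdd 0 H hφC1 hwC1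
  have hφφ := integrableOn_cell_contr_sgrad (δ := δ) hCmeas hCbdd 0 0 hφC1 hφC1
  simp only [zero_add] at hφw hφφ
  have hcross := hw φ hφC1 (hvper.sub hwper)
  have hφφ_nonneg : 0 ≤ ∫ ξ in cell δ, contr (C ξ) (sgrad φ ξ) (sgrad φ ξ) :=
    setIntegral_nonneg measurableSet_Icc fun ξ _ => hCpsd ξ _
  have hsum : IntegrableOn (fun ξ => contr (C ξ) (H + sgrad w ξ) (H + sgrad w ξ)
      + 2 * contr (C ξ) (sgrad φ ξ) (H + sgrad w ξ)) (cell δ) := hww.add (hφw.const_mul 2)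
  unfold cellEnergy
  rw [integral_congr_ae (ae_of_all _ hexpand), integral_add hsum hφφ,
    integral_add hww (hφw.const_mul 2), integral_const_mul, hcross]
  linarith

lemma cellEnergy_mono (hCmeas : ∀ i j k l, Measurable fun ξ => C ξ i j k l)
    (hCbdd : ∃ M, ∀ ξ i j k l, |C ξ i j k l| ≤ M)
    (hC'meas : ∀ i j k l, Measurable fun ξ => C' ξ i j k l)
    (hC'bdd : ∃ M, ∀ ξ i j k l, |C' ξ i j k l| ≤ M)
    (hle : ∀ ξ E, contr (C ξ) E E ≤ contr (C' ξ) E E) (hw : ContDiff ℝ 1 w) :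
    cellEnergy δ C H w ≤ cellEnergy δ C' H w :=
  setIntegral_mono_on (integrableOn_cell_contr_sgrad hCmeas hCbdd H H hw hw)
    (integrableOn_cell_contr_sgrad hC'meas hC'bdd H H hw hw) measurableSet_Icc fun ξ _ => hle ξ _

end CellEnergy

theorem homogenized_energy_monotone_general (δ : ℝ)
    (C1m C2m : (Fin 2 → ℝ) → Fin 2 → Fin 2 → Fin 2 → Fin 2 → ℝ)
    (hC1meas : ∀ i j k l, Measurable fun ξ => C1m ξ i j k l)
    (hC2meas : ∀ i j k l, Measurable fun ξ => C2m ξ i j k l)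
    (hC1bdd : ∃ M, ∀ ξ i j k l, |C1m ξ i j k l| ≤ M)
    (hC2bdd : ∃ M, ∀ ξ i j k l, |C2m ξ i j k l| ≤ M)
    (hC1sym : ∀ ξ i j k l, C1m ξ i j k l = C1m ξ k l i j)
    (hC1psd : ∀ (ξ : Fin 2 → ℝ) (E : Fin 2 → Fin 2 → ℝ), 0 ≤ contr (C1m ξ) E E)
    (hord : ∀ (ξ : Fin 2 → ℝ) (E : Fin 2 → Fin 2 → ℝ),
      contr (C1m ξ) E E ≤ contr (C2m ξ) E E)
    (H : Fin 2 → Fin 2 → ℝ)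
    (w1 w2 : (Fin 2 → ℝ) → (Fin 2 → ℝ))
    (hw1 : ContDiff ℝ 1 w1) (hw2 : ContDiff ℝ 1 w2)
    (hw1per : QPer δ w1) (hw2per : QPer δ w2)
    (hweak1 : ∀ φ : (Fin 2 → ℝ) → (Fin 2 → ℝ), ContDiff ℝ 1 φ → QPer δ φ →
      (∫ ξ in cell δ, contr (C1m ξ) (sgrad φ ξ)
        (fun k l => H k l + sgrad w1 ξ k l)) = 0) :
    (∫ ξ in cell δ, contr (C1m ξ) (fun i j => H i j + sgrad w1 ξ i j)
        (fun k l => H k l + sgrad w1 ξ k l)) ≤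
      ∫ ξ in cell δ, contr (C2m ξ) (fun i j => H i j + sgrad w2 ξ i j)
        (fun k l => H k l + sgrad w2 ξ k l) :=
  calc cellEnergy δ C1m H w1
      ≤ cellEnergy δ C1m H w2 :=
        IsWeakCorrector.cellEnergy_le hweak1 hC1meas hC1bdd hC1sym hC1psd hw1 hw1per hw2 hw2per
    _ ≤ cellEnergy δ C2m H w2 := cellEnergy_mono hC1meas hC1bdd hC2meas hC2bdd hord hw2

/-- Monotonicity of homogenization: if the microscopic tensors `C¹ᵐ ≤ C²ᵐ` as
quadratic forms (both measurable, bounded, `Q`-periodic, symmetric and positive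
semidefinite) and `w¹`, `w²` are `C¹` `Q`-periodic solutions of the respective weak
corrector cell problems for the same constant matrix `H`, then the homogenized
energies are ordered the same way. -/
theorem homogenized_energy_monotone (δ : ℝ) (hδ : 0 < δ)
    (C1m C2m : (Fin 2 → ℝ) → Fin 2 → Fin 2 → Fin 2 → Fin 2 → ℝ)
    (hC1meas : ∀ i j k l, Measurable fun ξ => C1m ξ i j k l)
    (hC2meas : ∀ i j k l, Measurable fun ξ => C2m ξ i j k l)
    (hC1bdd : ∃ M, ∀ ξ i j k l, |C1m ξ i j k l| ≤ M)
    (hC2bdd : ∃ M, ∀ ξ i j k l, |C2m ξ i j k l| ≤ M)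
    (hC1per : QPer δ C1m) (hC2per : QPer δ C2m)
    (hC1sym : ∀ ξ i j k l, C1m ξ i j k l = C1m ξ k l i j)
    (hC2sym : ∀ ξ i j k l, C2m ξ i j k l = C2m ξ k l i j)
    (hC1psd : ∀ (ξ : Fin 2 → ℝ) (E : Fin 2 → Fin 2 → ℝ), 0 ≤ contr (C1m ξ) E E)
    (hC2psd : ∀ (ξ : Fin 2 → ℝ) (E : Fin 2 → Fin 2 → ℝ), 0 ≤ contr (C2m ξ) E E)
    (hord : ∀ (ξ : Fin 2 → ℝ) (E : Fin 2 → Fin 2 → ℝ),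
      contr (C1m ξ) E E ≤ contr (C2m ξ) E E)
    (H : Fin 2 → Fin 2 → ℝ)
    (w1 w2 : (Fin 2 → ℝ) → (Fin 2 → ℝ))
    (hw1 : ContDiff ℝ 1 w1) (hw2 : ContDiff ℝ 1 w2)
    (hw1per : QPer δ w1) (hw2per : QPer δ w2)
    (hweak1 : ∀ φ : (Fin 2 → ℝ) → (Fin 2 → ℝ), ContDiff ℝ 1 φ → QPer δ φ →
      (∫ ξ in cell δ, contr (C1m ξ) (sgrad φ ξ)
        (fun k l => H k l + sgrad w1 ξ k l)) = 0)
    (hweak2 : ∀ φ : (Fin 2 → ℝ) → (Fin 2 → ℝ), ContDiff ℝ 1 φ → QPer δ φ →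
      (∫ ξ in cell δ, contr (C2m ξ) (sgrad φ ξ)
        (fun k l => H k l + sgrad w2 ξ k l)) = 0) :
    (∫ ξ in cell δ, contr (C1m ξ) (fun i j => H i j + sgrad w1 ξ i j)
        (fun k l => H k l + sgrad w1 ξ k l)) ≤
      ∫ ξ in cell δ, contr (C2m ξ) (fun i j => H i j + sgrad w2 ξ i j)
        (fun k l => H k l + sgrad w2 ξ k l) :=
  homogenized_energy_monotone_general δ C1m C2m hC1meas hC2meas hC1bdd hC2bdd hC1sym hC1psd hord H
    w1 w2 hw1 hw2 hw1per hw2per hweak1
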